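/- If a > 1 and b = -(a+1)², then the derivative of the Melnikov function satisfies M′(h) < 0 for every h > 0. -/

import Mathlib

/-- The Melnikov function `M(h; a, b)` of the discontinuous SD oscillator. -/
noncomputable def Mel (a b h : ℝ) : ℝ :=
  -(Real.pi / 4) * (a + 1) ^ 2 * (5 * a ^ 2 + 10 * a + 4 * b + 5)
    - (15 * a ^ 2 + 4 * b + 5) * Real.sqrt h / Real.sqrt 2
    - (3 * a ^ 2 + 6 * a + 2 * b + 3) * Real.pi * h
    - (13 * Real.sqrt 2 / 3) * (h * Real.sqrt h)
    - Real.pi * h ^ 2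
    - (1 / 4) * (a ^ 2 - 2 * a + 2 * h + 1) * (5 * a ^ 2 - 10 * a + 4 * b + 2 * h + 5)
        * Real.arctan (Real.sqrt (2 * h) / (a - 1))
    + (1 / 4) * (a ^ 2 + 2 * a + 2 * h + 1) * (5 * a ^ 2 + 10 * a + 4 * b + 2 * h + 5)
        * Real.arctan (Real.sqrt (2 * h) / (a + 1))

open Real

/-! Differentiating, every term in `1 / √(2h)` cancels, and with `s = √(2h)`,
`P = (a + 1)² + s²` one gets
`M′(h) = -6s - πP + (12a - P) arctan (s / (a - 1)) + P arctan (s / (a + 1))`.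
If `P ≥ 12a`, the middle term is `≤ 0` and the last one is `< Pπ/2`.
If `P < 12a`, bound the first arctangent by `π/2` and the second by its argument: what is left,
`-6s - (3π/2)((a - 1)² + s²) + Ps / (a + 1)`, is negative because
`(a - 1)² + s² ≥ 2(a - 1)s`, `π > 3` and `Ps < 12as ≤ (9a - 3)(a + 1)s`. -/

theorem Real.arctan_le_self {x : ℝ} (hx : 0 ≤ x) : arctan x ≤ x :=
  calc arctan x ≤ tan (arctan x) := le_tan (arctan_nonneg.2 hx) (arctan_lt_pi_div_two x)
    _ = x := tan_arctan x

theorem hasDerivAt_sqrt_two_mul {h : ℝ} (hh : 0 < h) :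
    HasDerivAt (fun x => √(2 * x)) (1 / √(2 * h)) h := by
  refine (((hasDerivAt_id h).const_mul 2).sqrt (by simp; positivity)).congr_deriv ?_
  simp only [id]
  field_simp

theorem hasDerivAt_arctan_sqrt_two_mul_div {c h : ℝ} (hc : c ≠ 0) (hh : 0 < h) :
    HasDerivAt (fun x => arctan (√(2 * x) / c)) (c / (√(2 * h) * (c ^ 2 + 2 * h))) h := by
  refine (((hasDerivAt_sqrt_two_mul hh).div_const c).arctan).congr_deriv ?_
  have hs : √(2 * h) ^ 2 = 2 * h := sq_sqrt (by positivity)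
  field_simp
  rw [hs]

-- The factor `c ^ 2 + 2 * x` cancels the denominator of the derivative of the arctangent.
theorem hasDerivAt_mul_arctan_sqrt_two_mul_div {c h : ℝ} (q : ℝ) (hc : c ≠ 0) (hh : 0 < h) :
    HasDerivAt (fun x => (c ^ 2 + 2 * x) * (q + 2 * x) * arctan (√(2 * x) / c))
      (2 * (c ^ 2 + q + 4 * h) * arctan (√(2 * h) / c) + c * (q + 2 * h) / √(2 * h)) h := by
  have hlin (p : ℝ) : HasDerivAt (fun x => p + 2 * x) 2 h := by
    simpa using ((hasDerivAt_id h).const_mul 2).const_add p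
  refine (((hlin _).mul (hlin q)).mul (hasDerivAt_arctan_sqrt_two_mul_div hc hh)).congr_deriv ?_
  have : c ^ 2 + 2 * h ≠ 0 := by positivity
  simp only [Pi.mul_apply]
  field_simp
  ring

theorem hasDerivAt_mul_sqrt_two_mul {h : ℝ} (hh : 0 < h) :
    HasDerivAt (fun x => x * √(2 * x)) (3 / 2 * √(2 * h)) h := by
  refine ((hasDerivAt_id h).mul (hasDerivAt_sqrt_two_mul hh)).congr_deriv ?_
  have hs : √(2 * h) ^ 2 = 2 * h := sq_sqrt (by positivity)
  field_simp
  simp only [id]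
  linear_combination -hs

/-- `M′(h; a, b)` in the variable `s = √(2h)`. -/
noncomputable def melDeriv (a b s : ℝ) : ℝ :=
  -6 * s - π * (3 * a ^ 2 + 6 * a + 2 * b + 3 + s ^ 2)
    - (3 * a ^ 2 - 6 * a + 2 * b + 3 + s ^ 2) * arctan (s / (a - 1))
    + (3 * a ^ 2 + 6 * a + 2 * b + 3 + s ^ 2) * arctan (s / (a + 1))

theorem mel_eq_sqrt_two_mul (a b : ℝ) : Mel a b = fun x =>
    -(π / 4) * (a + 1) ^ 2 * (5 * a ^ 2 + 10 * a + 4 * b + 5)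
      - (15 * a ^ 2 + 4 * b + 5) / 2 * √(2 * x)
      - (3 * a ^ 2 + 6 * a + 2 * b + 3) * π * x
      - 13 / 3 * (x * √(2 * x))
      - π * x ^ 2
      - 1 / 4 * (((a - 1) ^ 2 + 2 * x) * (5 * a ^ 2 - 10 * a + 4 * b + 5 + 2 * x)
          * arctan (√(2 * x) / (a - 1)))
      + 1 / 4 * (((a + 1) ^ 2 + 2 * x) * (5 * a ^ 2 + 10 * a + 4 * b + 5 + 2 * x)
          * arctan (√(2 * x) / (a + 1))) := by
  funext x
  have hdiv (y : ℝ) : y / √2 = y * √2 / 2 := by field_simp; simp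
  rw [Mel, sqrt_mul zero_le_two, hdiv]
  ring

theorem hasDerivAt_mel {a b h : ℝ} (ha₁ : a ≠ 1) (ha₂ : a ≠ -1) (hh : 0 < h) :
    HasDerivAt (Mel a b) (melDeriv a b √(2 * h)) h := by
  rw [mel_eq_sqrt_two_mul]
  refine ((((((hasDerivAt_const h _).sub ((hasDerivAt_sqrt_two_mul hh).const_mul _)).sub
    ((hasDerivAt_id h).const_mul _)).sub ((hasDerivAt_mul_sqrt_two_mul hh).const_mul _)).sub
    ((hasDerivAt_pow 2 h).const_mul _)).sub
    ((hasDerivAt_mul_arctan_sqrt_two_mul_div _ (sub_ne_zero.2 ha₁) hh).const_mul _)).add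
    ((hasDerivAt_mul_arctan_sqrt_two_mul_div _ (by contrapose! ha₂; linarith) hh).const_mul _)
    |>.congr_deriv ?_
  have hs : h = √(2 * h) ^ 2 / 2 := by rw [sq_sqrt (by positivity)]; ring
  have : √(2 * h) ≠ 0 := by positivity
  rw [melDeriv]
  generalize √(2 * h) = s at *
  subst hs
  field_simp
  ring

theorem melDeriv_hopf_eq (a s : ℝ) : melDeriv a (-(a + 1) ^ 2) s =
    -6 * s - π * ((a + 1) ^ 2 + s ^ 2) + (12 * a - ((a + 1) ^ 2 + s ^ 2)) * arctan (s / (a - 1))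
      + ((a + 1) ^ 2 + s ^ 2) * arctan (s / (a + 1)) := by
  rw [melDeriv]
  ring

theorem melDeriv_hopf_neg {a s : ℝ} (ha : 1 < a) (hs : 0 < s) :
    melDeriv a (-(a + 1) ^ 2) s < 0 := by
  have ha₁ : 0 < a - 1 := sub_pos.2 ha
  set P := (a + 1) ^ 2 + s ^ 2
  have hPpos : 0 < P := by positivity
  have hA₁ : 0 ≤ arctan (s / (a - 1)) := arctan_nonneg.2 (by positivity)
  rw [melDeriv_hopf_eq]
  rcases le_or_gt (12 * a) P with hP12 | hP12
  · calc -6 * s - π * P + (12 * a - P) * arctan (s / (a - 1)) + P * arctan (s / (a + 1))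
        ≤ -6 * s - π * P + P * arctan (s / (a + 1)) := by
          linarith [mul_nonneg (sub_nonneg.2 hP12) hA₁]
      _ < -6 * s - π * P + P * (π / 2) := by gcongr; exact arctan_lt_pi_div_two _
      _ < 0 := by linarith [mul_pos pi_pos hPpos]
  · calc -6 * s - π * P + (12 * a - P) * arctan (s / (a - 1)) + P * arctan (s / (a + 1))
        < -6 * s - π * P + (12 * a - P) * (π / 2) + P * (s / (a + 1)) := by
          have h₁ := mul_lt_mul_of_pos_left (arctan_lt_pi_div_two (s / (a - 1))) (sub_pos.2 hP12)
          have h₂ := mul_le_mul_of_nonneg_left (arctan_le_self (by positivity : 0 ≤ s / (a + 1)))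
            hPpos.le
          linarith
      _ = -6 * s - 3 * π / 2 * ((a - 1) ^ 2 + s ^ 2) + P * s / (a + 1) := by ring
      _ < -6 * s - 9 * (a - 1) * s + 12 * a * s / (a + 1) := by
          have h₁ : 9 * (a - 1) * s < 3 * π / 2 * ((a - 1) ^ 2 + s ^ 2) := by
            nlinarith [two_mul_le_add_sq (a - 1) s, pi_gt_three, mul_pos ha₁ hs]
          have h₂ : P * s / (a + 1) < 12 * a * s / (a + 1) := by gcongr
          linarith
      _ = -3 * s * (3 * a + 1) * (a - 1) / (a + 1) := by field_simp; ring
      _ < 0 := by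
          apply div_neg_of_neg_of_pos _ (by positivity)
          linarith [mul_pos (mul_pos hs (by positivity : (0:ℝ) < 3 * a + 1)) ha₁]

/-- If `a > 1` and `b = -(a+1)²`, then `M'(h) < 0` for every `h > 0`. -/
theorem melnikov_first_deriv_neg_at_hopf (a : ℝ) (ha : 1 < a) :
    ∀ h : ℝ, 0 < h → deriv (Mel a (-(a + 1) ^ 2)) h < 0 := by
  intro h hh
  rw [(hasDerivAt_mel ha.ne' (by linarith) hh).deriv]
  exact melDeriv_hopf_neg ha (sqrt_pos.2 (by positivity))
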